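/- Let A ∈ ℝ^{n×n} be symmetric positive-definite, M_0 ∈ ℝ^{n×n}, R_0 := I_n − A M_0, G_0 := −A R_0, and i ≥ 1. For every real polynomial q with deg q ≤ i and q(0) = 1, there exists M ∈ M_0 + K_i(A², G_0) such that ‖A⁻¹ − M‖_{F,A} ≤ (max over eigenvalues λ of A of |q(λ²)|) · ‖A⁻¹ − M_0‖_{F,A}. -/

import Mathlib

open Matrix

/-- Frobenius inner product `(X,Y)_F = trace (Xᵀ Y)`. -/
noncomputable def finner {n : ℕ} (X Y : Matrix (Fin n) (Fin n) ℝ) : ℝ :=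
  (Xᵀ * Y).trace

/-- Frobenius norm `‖X‖_F`. -/
noncomputable def fnorm {n : ℕ} (X : Matrix (Fin n) (Fin n) ℝ) : ℝ :=
  Real.sqrt (finner X X)

/-- A-weighted Frobenius inner product `(X,Y)_{F,A} = trace (Xᵀ A Y)`. -/
noncomputable def finnerA {n : ℕ} (A X Y : Matrix (Fin n) (Fin n) ℝ) : ℝ :=
  (Xᵀ * A * Y).trace

/-- A-weighted Frobenius norm `‖X‖_{F,A}`. -/
noncomputable def fnormA {n : ℕ} (A X : Matrix (Fin n) (Fin n) ℝ) : ℝ :=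
  Real.sqrt (finnerA A X X)

/-- Krylov subspace `K_i(B, X) = span {X, BX, …, B^(i-1) X}`. -/
noncomputable def krylov {n : ℕ} (i : ℕ) (B X : Matrix (Fin n) (Fin n) ℝ) :
    Submodule ℝ (Matrix (Fin n) (Fin n) ℝ) :=
  Submodule.span ℝ {Y | ∃ j < i, Y = B ^ j * X}

/-!
With `E := A⁻¹ - M₀` one has `G₀ = -A² E`. Writing `q = 1 + X · q.divX`, the Krylov update
`M := M₀ + q.divX(A²) G₀` has error `A⁻¹ - M = q(A²) E`. The matrix `q(A²) = r(A)` with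
`r := q ∘ X²` is a function of `A`, so by the functional calculus
`r(A)ᵀ A r(A) = (r² · id)(A) ≤ C² A` for `C := maxₖ |q(λₖ²)|`, and hence
`‖q(A²) E‖²_{F,A} ≤ C² ‖E‖²_{F,A}`.
-/

open Polynomial
open scoped MatrixOrder

theorem aeval_mul_mem_krylov {n i : ℕ} (B X : Matrix (Fin n) (Fin n) ℝ) {p : ℝ[X]}
    (hp : p.degree < i) : aeval B p * X ∈ krylov i B X := by
  rw [aeval_def, eval₂_eq_sum, Polynomial.sum, Finset.sum_mul]
  refine Submodule.sum_mem _ fun j hj => ?_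
  rw [← Algebra.smul_def, smul_mul_assoc]
  refine Submodule.smul_mem _ _ (Submodule.subset_span ⟨j, ?_, rfl⟩)
  exact_mod_cast (le_degree_of_mem_supp j hj).trans_lt hp

theorem aeval_mul_eq_add_aeval_divX {K R : Type*} [CommSemiring K] [Semiring R] [Algebra K R]
    (B E : R) {q : K[X]} (hq0 : q.eval 0 = 1) :
    aeval B q * E = E + aeval B q.divX * (B * E) := by
  conv_lhs => rw [← q.X_mul_divX_add, coeff_zero_eq_eval_zero, hq0]
  rw [C_1, mul_comm X, map_add, map_mul, aeval_X, map_one, add_mul, one_mul, add_comm, mul_assoc]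

theorem mul_one_sub_mul_eq_sq_mul_inv_sub {ι α : Type*} [Fintype ι] [DecidableEq ι] [CommRing α]
    {A : Matrix ι ι α} (hA : IsUnit A.det) (M : Matrix ι ι α) :
    A * (1 - A * M) = A ^ 2 * (A⁻¹ - M) := by
  rw [sq, mul_assoc, mul_sub A A⁻¹, mul_nonsing_inv A hA]

section WeightedFrobenius

variable {n : ℕ}

theorem finnerA_smul (c : ℝ) (A X Y : Matrix (Fin n) (Fin n) ℝ) :
    finnerA (c • A) X Y = c * finnerA A X Y := by
  rw [finnerA, finnerA, Matrix.mul_smul, Matrix.smul_mul, trace_smul, smul_eq_mul]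

theorem finnerA_mul_mul (A Q X Y : Matrix (Fin n) (Fin n) ℝ) :
    finnerA A (Q * X) (Q * Y) = finnerA (Qᵀ * A * Q) X Y := by
  simp only [finnerA, transpose_mul, mul_assoc]

theorem finnerA_le_finnerA_of_le {A B : Matrix (Fin n) (Fin n) ℝ} (hAB : A ≤ B)
    (X : Matrix (Fin n) (Fin n) ℝ) : finnerA A X X ≤ finnerA B X X := by
  have h := ((le_iff.mp hAB).conjTranspose_mul_mul_same X).trace_nonneg
  rwa [conjTranspose_eq_transpose_of_trivial, mul_sub, sub_mul, trace_sub, sub_nonneg] at h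

theorem fnormA_mul_le {A Q : Matrix (Fin n) (Fin n) ℝ} {C : ℝ} (hC : 0 ≤ C)
    (h : Qᵀ * A * Q ≤ C ^ 2 • A) (X : Matrix (Fin n) (Fin n) ℝ) :
    fnormA A (Q * X) ≤ C * fnormA A X := by
  calc fnormA A (Q * X) ≤ Real.sqrt (C ^ 2 * finnerA A X X) := by
        rw [fnormA, finnerA_mul_mul, ← finnerA_smul]
        exact Real.sqrt_le_sqrt (finnerA_le_finnerA_of_le h X)
    _ = C * fnormA A X := by rw [Real.sqrt_mul (sq_nonneg C), Real.sqrt_sq hC, fnormA]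

end WeightedFrobenius

theorem transpose_aeval_mul_mul_aeval_le {ι : Type*} [Fintype ι] [DecidableEq ι]
    {A : Matrix ι ι ℝ} (hA : A.PosSemidef) (r : ℝ[X]) {C : ℝ}
    (hC : ∀ k, |r.eval (hA.1.eigenvalues k)| ≤ C) :
    (aeval A r)ᵀ * A * aeval A r ≤ C ^ 2 • A := by
  have hAsa : IsSelfAdjoint A := hA.1
  have hr : aeval A r = cfc (r.eval ·) A := (cfc_polynomial r A).symm
  have hsymm : (aeval A r)ᵀ = aeval A r := by
    rw [← conjTranspose_eq_transpose_of_trivial, ← star_eq_conjTranspose, hr,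
      IsSelfAdjoint.star_eq (cfc_predicate _ A)]
  have hlhs : (aeval A r)ᵀ * A * aeval A r = cfc (fun x => r.eval x * x * r.eval x) A := by
    rw [hsymm, hr, cfc_mul .., cfc_mul .., cfc_id' ..]
  rw [hlhs, ← cfc_const_mul_id ..]
  refine cfc_mono fun x hx => ?_
  obtain ⟨k, rfl⟩ := hA.1.spectrum_real_eq_range_eigenvalues ▸ hx
  have hsq : r.eval (hA.1.eigenvalues k) ^ 2 ≤ C ^ 2 :=
    sq_le_sq' (abs_le.mp (hC k)).1 (abs_le.mp (hC k)).2
  nlinarith [hA.eigenvalues_nonneg k]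

theorem ncg_polynomial_bound_general {n : ℕ}
    (A M₀ : Matrix (Fin n) (Fin n) ℝ) (hA : A.PosDef)
    (R₀ G₀ : Matrix (Fin n) (Fin n) ℝ)
    (hR₀ : R₀ = 1 - A * M₀) (hG₀ : G₀ = -(A * R₀))
    (i : ℕ)
    (q : Polynomial ℝ) (hdeg : q.natDegree ≤ i) (hq0 : q.eval 0 = 1) :
    ∃ M : Matrix (Fin n) (Fin n) ℝ,
      (∃ V ∈ krylov i (A ^ 2) G₀, M = M₀ + V) ∧
      fnormA A (A⁻¹ - M) ≤
        (⨆ k, |q.eval ((hA.1.eigenvalues k) ^ 2)|) * fnormA A (A⁻¹ - M₀) := by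
  have hq : q ≠ 0 := by rintro rfl; simp at hq0
  have hdivX : q.divX.degree < i :=
    (degree_divX_lt hq).trans_le (degree_le_of_natDegree_le hdeg)
  have hG : G₀ = -(A ^ 2 * (A⁻¹ - M₀)) := by
    rw [hG₀, hR₀, mul_one_sub_mul_eq_sq_mul_inv_sub hA.det_pos.ne'.isUnit]
  refine ⟨M₀ + aeval (A ^ 2) q.divX * G₀, ⟨_, aeval_mul_mem_krylov _ _ hdivX, rfl⟩, ?_⟩
  have herr : A⁻¹ - (M₀ + aeval (A ^ 2) q.divX * G₀)
      = aeval A (q.comp (X ^ 2)) * (A⁻¹ - M₀) := by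
    rw [aeval_comp, aeval_X_pow, aeval_mul_eq_add_aeval_divX _ _ hq0, hG, mul_neg]
    abel
  have hbound : ∀ k, |(q.comp (X ^ 2)).eval (hA.1.eigenvalues k)|
      ≤ ⨆ k, |q.eval ((hA.1.eigenvalues k) ^ 2)| := fun k => by
    rw [eval_comp, eval_pow, eval_X]
    exact le_ciSup (f := fun k => |q.eval ((hA.1.eigenvalues k) ^ 2)|)
      (Set.finite_range _).bddAbove k
  rw [herr]
  exact fnormA_mul_le (Real.iSup_nonneg fun _ => abs_nonneg _)
    (transpose_aeval_mul_mul_aeval_le hA.posSemidef _ hbound) _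

/-- Polynomial min-max bound for NCG: for every polynomial q of degree at most i
with q(0) = 1 there is an element of the affine Krylov subspace whose A-weighted
Frobenius error is bounded by max_λ |q(λ²)| times the initial error. -/
theorem ncg_polynomial_bound {n : ℕ} (hn : 0 < n)
    (A M₀ : Matrix (Fin n) (Fin n) ℝ) (hA : A.PosDef)
    (R₀ G₀ : Matrix (Fin n) (Fin n) ℝ)
    (hR₀ : R₀ = 1 - A * M₀) (hG₀ : G₀ = -(A * R₀))
    (i : ℕ) (hi : 1 ≤ i)
    (q : Polynomial ℝ) (hdeg : q.natDegree ≤ i) (hq0 : q.eval 0 = 1) :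
    ∃ M : Matrix (Fin n) (Fin n) ℝ,
      (∃ V ∈ krylov i (A ^ 2) G₀, M = M₀ + V) ∧
      fnormA A (A⁻¹ - M) ≤
        (⨆ k, |q.eval ((hA.1.eigenvalues k) ^ 2)|) * fnormA A (A⁻¹ - M₀) :=
  ncg_polynomial_bound_general A M₀ hA R₀ G₀ hR₀ hG₀ i q hdeg hq0
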